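/- arXiv:2406.03334 — 3 statements merged into one kernel-verified Lean document; each statement's English description precedes it below -/
import Mathlib

section
/- If γ : [0,1] → R^D is a continuously differentiable path with f(γ(t), x) = f(γ(0), x) for all t ∈ [0,1] and all x in the training set X, then the pullback length of γ is zero: ∫₀¹ √(γ'(t)^T GGN_{γ(t)} γ'(t)) dt = 0, where GGN_w = J_w^T H_w J_w with H_w positive semi-definite. -/
open Matrix Set Filter Topology

/- Constancy of `F ∘ γ` forces the velocity into the kernel of the Jacobian: by the chain rule
`J_{γ t} (γ' t)` is the derivative of the constant map `t ↦ F (γ t)`, hence zero on `(0, 1)`.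
The integrand `√(vᵀ Jᵀ H J v)` therefore vanishes off the null set `{0, 1}`. -/

theorem HasDerivAt.eq_zero_of_eventually_eq_const {𝕜 E : Type*} [NontriviallyNormedField 𝕜]
    [NormedAddCommGroup E] [NormedSpace 𝕜 E] {g : 𝕜 → E} {g' c : E} {t : 𝕜}
    (hg : HasDerivAt g g' t) (hc : ∀ᶠ s in 𝓝 t, g s = c) : g' = 0 :=
  hg.unique ((hasDerivAt_const t c).congr_of_eventuallyEq hc)

theorem HasDerivAt.eq_zero_of_forall_mem_Icc_eq {E : Type*} [NormedAddCommGroup E]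
    [NormedSpace ℝ E] {g : ℝ → E} {g' c : E} {a b t : ℝ} (hg : HasDerivAt g g' t)
    (ht : t ∈ Ioo a b) (hc : ∀ s ∈ Icc a b, g s = c) : g' = 0 :=
  hg.eq_zero_of_eventually_eq_const <|
    eventually_of_mem (Ioo_mem_nhds ht.1 ht.2) fun s hs => hc s (Ioo_subset_Icc_self hs)

theorem pullback_length_zero_of_constant_predictions_general {D M : ℕ}
    (F : (Fin D → ℝ) → Fin M → ℝ)
    (Jlin : (Fin D → ℝ) → (Fin D → ℝ) →L[ℝ] (Fin M → ℝ))
    (hF : ∀ w, HasFDerivAt F (Jlin w) w)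
    (H : (Fin D → ℝ) → Matrix (Fin M) (Fin M) ℝ)
    (γ γ' : ℝ → Fin D → ℝ)
    (hγ : ∀ t, HasDerivAt γ (γ' t) t)
    (hconst : ∀ t ∈ Set.Icc (0:ℝ) 1, F (γ t) = F (γ 0)) :
    ∫ t in (0:ℝ)..1,
      Real.sqrt (Jlin (γ t) (γ' t) ⬝ᵥ (H (γ t)).mulVec (Jlin (γ t) (γ' t))) = 0 := by
  have hJv : ∀ t ∈ Ioo (0:ℝ) 1, Jlin (γ t) (γ' t) = 0 := fun t ht =>
    ((hF (γ t)).comp_hasDerivAt t (hγ t)).eq_zero_of_forall_mem_Icc_eq ht hconst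
  calc _ = ∫ _ in (0:ℝ)..1, (0:ℝ) :=
        intervalIntegral.integral_congr_Ioo_of_le zero_le_one fun t ht => by simp [hJv t ht]
    _ = 0 := intervalIntegral.integral_zero

/-- Along a C¹ path on which the (stacked) network outputs `F` over the training
set are constant, the pullback (GGN pseudo-metric) length of the path is zero. -/
theorem pullback_length_zero_of_constant_predictions {D M : ℕ}
    (F : (Fin D → ℝ) → Fin M → ℝ)
    (Jlin : (Fin D → ℝ) → (Fin D → ℝ) →L[ℝ] (Fin M → ℝ))
    (hF : ∀ w, HasFDerivAt F (Jlin w) w)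
    (H : (Fin D → ℝ) → Matrix (Fin M) (Fin M) ℝ)
    (hH : ∀ w, (H w).PosSemidef)
    (γ γ' : ℝ → Fin D → ℝ)
    (hγ : ∀ t, HasDerivAt γ (γ' t) t) (hγ' : Continuous γ')
    (hconst : ∀ t ∈ Set.Icc (0:ℝ) 1, F (γ t) = F (γ 0)) :
    ∫ t in (0:ℝ)..1,
      Real.sqrt (Jlin (γ t) (γ' t) ⬝ᵥ (H (γ t)).mulVec (Jlin (γ t) (γ' t))) = 0 :=
  pullback_length_zero_of_constant_predictions_general F Jlin hF H γ γ' hγ hconst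
end

section
/- Let f be such that w ↦ f(w, x) is L-Lipschitz for every x ∈ X. If w₀ ∼ w₁ in the quotient metric sense, i.e., the quotient distance d_P([w₀],[w₁]) = 0, then f(w₀, x) = f(w₁, x) for all x ∈ X. -/
/-!
Reparametrization preserves the prediction at every `x ∈ X`, so along a chain
`w₀ ∼ p₀, q₀ ∼ p₁, …, qₙ ∼ w₁` the prediction at `x` only changes at the jumps
`pᵢ → qᵢ`, each by at most `L ‖pᵢ - qᵢ‖`. Hence `f w₀ x` and `f w₁ x` are within
`L ε` of each other for every `ε > 0`.
-/

open Finset Filter Topology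

/-- The smooth-reparameterization relation on the Euclidean parameter space:
`w ∼ w'` iff there is a piecewise differentiable path from `w` to `w'` along
which predictions on every input in `X` are constant. -/
def Reparam {D I O : ℕ}
    (f : EuclideanSpace ℝ (Fin D) → (Fin I → ℝ) → EuclideanSpace ℝ (Fin O))
    (X : Set (Fin I → ℝ)) (w w' : EuclideanSpace ℝ (Fin D)) : Prop :=
  ∃ γ : ℝ → EuclideanSpace ℝ (Fin D),
    ContinuousOn γ (Set.Icc 0 1) ∧
    (∃ s : Finset ℝ, ∀ t ∈ Set.Icc (0:ℝ) 1, t ∉ s → DifferentiableAt ℝ γ t) ∧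
    γ 0 = w ∧ γ 1 = w' ∧
    ∀ t ∈ Set.Icc (0:ℝ) 1, ∀ x ∈ X, f (γ t) x = f w x

theorem Reparam.apply_eq {D I O : ℕ}
    {f : EuclideanSpace ℝ (Fin D) → (Fin I → ℝ) → EuclideanSpace ℝ (Fin O)}
    {X : Set (Fin I → ℝ)} {w w' : EuclideanSpace ℝ (Fin D)}
    (h : Reparam f X w w') {x : Fin I → ℝ} (hx : x ∈ X) : f w' x = f w x := by
  obtain ⟨γ, -, -, -, hγ1, hγ⟩ := h
  rw [← hγ1]
  exact hγ 1 ⟨zero_le_one, le_rfl⟩ x hx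

theorem dist_le_sum_of_chain {β : Type*} [PseudoMetricSpace β] :
    ∀ {n : ℕ} {u v : β} {a b : Fin (n + 1) → β}, a 0 = u →
      (∀ i : Fin n, a i.succ = b i.castSucc) → b (Fin.last n) = v →
      dist u v ≤ ∑ i, dist (a i) (b i)
  | 0, u, v, a, b, h0, _, hlast => by
    simp [← h0, ← hlast]
  | n + 1, u, v, a, b, h0, hstep, hlast => by
    have htail : dist (b 0) v ≤ ∑ i : Fin (n + 1), dist (a i.succ) (b i.succ) :=
      dist_le_sum_of_chain (hstep 0) (fun i => hstep i.succ) hlast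
    calc dist u v ≤ dist u (b 0) + dist (b 0) v := dist_triangle _ _ _
      _ ≤ dist (a 0) (b 0) + ∑ i : Fin (n + 1), dist (a i.succ) (b i.succ) := by
        rw [h0]; gcongr
      _ = ∑ i, dist (a i) (b i) := (Fin.sum_univ_succ fun i => dist (a i) (b i)).symm

theorem nonpos_of_forall_pos_le_mul {a c : ℝ} (h : ∀ ε > 0, a ≤ c * ε) : a ≤ 0 := by
  have hlim : Tendsto (fun ε => c * ε) (𝓝[>] 0) (𝓝 0) :=
    ((continuous_const_mul c).tendsto' 0 0 (mul_zero c)).mono_left nhdsWithin_le_nhds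
  exact ge_of_tendsto hlim (eventually_nhdsWithin_of_forall h)

/-- If `f` is `L`-Lipschitz in the parameters on the training inputs and the
quotient (chain) distance between the classes of `w₀` and `w₁` vanishes, then
`w₀` and `w₁` parametrize the same function on `X`. -/
theorem quotient_distance_zero_implies_same_function {D I O : ℕ}
    (f : EuclideanSpace ℝ (Fin D) → (Fin I → ℝ) → EuclideanSpace ℝ (Fin O))
    (X : Set (Fin I → ℝ)) (L : ℝ)
    (hLip : ∀ p q x, x ∈ X → ‖f p x - f q x‖ ≤ L * ‖p - q‖)
    (w₀ w₁ : EuclideanSpace ℝ (Fin D))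
    (hdist : ∀ ε > 0, ∃ (n : ℕ) (p q : Fin (n + 1) → EuclideanSpace ℝ (Fin D)),
      Reparam f X w₀ (p 0) ∧
      (∀ i : Fin n, Reparam f X (q i.castSucc) (p i.succ)) ∧
      Reparam f X (q (Fin.last n)) w₁ ∧
      ∑ i, ‖p i - q i‖ < ε) :
    ∀ x ∈ X, f w₀ x = f w₁ x := by
  intro x hx
  have hsmall : ∀ ε > 0, dist (f w₀ x) (f w₁ x) ≤ max L 0 * ε := by
    intro ε hε
    obtain ⟨n, p, q, h0, hstep, hlast, hsum⟩ := hdist ε hε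
    calc dist (f w₀ x) (f w₁ x) ≤ ∑ i, dist (f (p i) x) (f (q i) x) :=
          dist_le_sum_of_chain (h0.apply_eq hx) (fun i => (hstep i).apply_eq hx)
            (hlast.apply_eq hx).symm
      _ ≤ ∑ i, L * ‖p i - q i‖ :=
          sum_le_sum fun i _ => (dist_eq_norm _ _).trans_le (hLip _ _ x hx)
      _ = L * ∑ i, ‖p i - q i‖ := (mul_sum _ _ _).symm
      _ ≤ max L 0 * ε :=
          mul_le_mul (le_max_left _ _) hsum.le (sum_nonneg fun _ _ => norm_nonneg _)
            (le_max_right _ _)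
  exact dist_le_zero.1 (nonpos_of_forall_pos_le_mul hsmall)
end

section
/- For a quadratic form metric that is uniformly bounded (‖v‖_{G_w} ≤ L‖v‖ for all v, w), if the quotient distance d_P([w₀],[w₁]) < δ then the geodesic distance satisfies d_G(w₀, w₁) < 3Lδ, assuming that any two points in the same equivalence class are connected by paths of arbitrarily small pullback length. -/
open Matrix MeasureTheory Set

/-!
Let `d` be the infimum of the lengths `∫₀¹ ‖γ'‖_{G_γ}` of C¹ paths. Since the integrand is
positively homogeneous in the velocity, `d` satisfies the triangle inequality: reparametrizing a
path by the smoothstep `3t² - 2t³` keeps its length and makes it stationary at both ends, so two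
such paths concatenate to a C¹ path. The hypotheses give `d = 0` between equivalent points and
`d(p, q) ≤ L‖p - q‖` along segments, so along the chain `d(w₀, w₁) ≤ L ∑ ‖pᵢ - qᵢ‖ < Lδ`.
-/

theorem hasDerivAt_ite_le {E : Type*} [NormedAddCommGroup E] [NormedSpace ℝ E]
    {f g f' g' : ℝ → E} {a : ℝ}
    (hf : ∀ t, HasDerivAt f (f' t) t) (hg : ∀ t, HasDerivAt g (g' t) t)
    (hfg : f a = g a) (hfg' : f' a = g' a) (t : ℝ) :
    HasDerivAt (fun t => if t ≤ a then f t else g t) (if t ≤ a then f' t else g' t) t := by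
  rcases lt_trichotomy t a with hta | rfl | hat
  · rw [if_pos hta.le]
    refine (hf t).congr_of_eventuallyEq ?_
    filter_upwards [Iio_mem_nhds hta] with x hx using if_pos (le_of_lt hx)
  · rw [if_pos le_rfl, ← hasDerivWithinAt_univ, ← Iic_union_Ici]
    refine HasDerivWithinAt.union ?_ ?_
    · exact (hf t).hasDerivWithinAt.congr (fun x hx => if_pos hx) (if_pos le_rfl)
    · rw [hfg']
      refine (hg t).hasDerivWithinAt.congr (fun x hx => ?_) (by rw [if_pos le_rfl, hfg])
      rcases (mem_Ici.1 hx).eq_or_lt with rfl | hlt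
      · rw [if_pos le_rfl, hfg]
      · exact if_neg (not_le.2 hlt)
  · rw [if_neg (not_le.2 hat)]
    refine (hg t).congr_of_eventuallyEq ?_
    filter_upwards [Ioi_mem_nhds hat] with x hx using if_neg (not_le.2 hx)

def smoothstep (t : ℝ) : ℝ := 3 * t ^ 2 - 2 * t ^ 3

theorem hasDerivAt_smoothstep (t : ℝ) : HasDerivAt smoothstep (6 * t * (1 - t)) t := by
  have h := ((hasDerivAt_pow 2 t).const_mul 3).sub ((hasDerivAt_pow 3 t).const_mul 2)
  exact h.congr_deriv (by ring)

@[simp]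
theorem smoothstep_zero : smoothstep 0 = 0 := by norm_num [smoothstep]

@[simp]
theorem smoothstep_one : smoothstep 1 = 1 := by norm_num [smoothstep]

@[fun_prop]
theorem continuous_smoothstep : Continuous smoothstep := by
  unfold smoothstep; fun_prop

section PathLength

variable {E : Type*} (F : E → E → ℝ)

-- Where the integrand is not integrable the Bochner integral, hence the length, is the junk `0`.
noncomputable def pathLength (γ γ' : ℝ → E) : ℝ := ∫ t in (0:ℝ)..1, F (γ t) (γ' t)

variable {F}

theorem pathLength_nonneg (hF : ∀ x v, 0 ≤ F x v) (γ γ' : ℝ → E) : 0 ≤ pathLength F γ γ' :=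
  intervalIntegral.integral_nonneg zero_le_one fun _ _ => hF _ _

theorem pathLength_const_le [Norm E] {L : ℝ} (hF : ∀ x v, 0 ≤ F x v)
    (hFL : ∀ x v, F x v ≤ L * ‖v‖) (γ : ℝ → E) (v : E) :
    pathLength F γ (fun _ => v) ≤ L * ‖v‖ := by
  have h := intervalIntegral.norm_integral_le_of_norm_le_const (a := 0) (b := 1) (C := L * ‖v‖)
    (f := fun t => F (γ t) v) fun t _ => by
      rw [Real.norm_of_nonneg (hF _ _)]; exact hFL _ _
  simpa [pathLength] using (le_abs_self _).trans h

noncomputable def pathConcat (f g : ℝ → E) (t : ℝ) : E :=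
  if t ≤ 1 / 2 then f (2 * t) else g (2 * t - 1)

theorem continuous_pathConcat [TopologicalSpace E] {f g : ℝ → E} (hf : Continuous f)
    (hg : Continuous g) (h : f 1 = g 0) : Continuous (pathConcat f g) :=
  Continuous.if_le (by fun_prop) (by fun_prop) continuous_id continuous_const
    fun t ht => by norm_num [ht, h]

end PathLength

section GeodesicDist

variable {E : Type*} [NormedAddCommGroup E] [NormedSpace ℝ E] {F : E → E → ℝ}

theorem hasDerivAt_pathConcat {γ₁ γ₁' γ₂ γ₂' : ℝ → E} (hγ₁ : ∀ t, HasDerivAt γ₁ (γ₁' t) t)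
    (hγ₂ : ∀ t, HasDerivAt γ₂ (γ₂' t) t) (h1 : γ₁ 1 = γ₂ 0) (h1' : γ₁' 1 = γ₂' 0) (t : ℝ) :
    HasDerivAt (pathConcat γ₁ γ₂) (pathConcat ((2 : ℝ) • γ₁') ((2 : ℝ) • γ₂') t) t := by
  have hdouble : ∀ c t : ℝ, HasDerivAt (fun t : ℝ => 2 * t - c) 2 t := fun c t => by
    simpa using ((hasDerivAt_id t).const_mul 2).sub_const c
  exact hasDerivAt_ite_le (a := 1 / 2) (f := fun t => γ₁ (2 * t)) (g := fun t => γ₂ (2 * t - 1))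
    (fun t => by simpa [Function.comp_def] using (hγ₁ _).scomp t (hdouble 0 t))
    (fun t => (hγ₂ _).scomp t (hdouble 1 t)) (by norm_num [h1]) (by norm_num [h1']) t

theorem pathLength_comp_smoothstep (hFhom : ∀ x (c : ℝ) v, 0 ≤ c → F x (c • v) = c * F x v)
    (γ γ' : ℝ → E) :
    pathLength F (fun t => γ (smoothstep t)) (fun t => (6 * t * (1 - t)) • γ' (smoothstep t)) =
      pathLength F γ γ' := by
  unfold pathLength
  conv_rhs => rw [← smoothstep_zero, ← smoothstep_one]
  rw [← intervalIntegral.integral_comp_mul_deriv_of_deriv_nonneg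
    continuous_smoothstep.continuousOn (fun t _ => hasDerivAt_smoothstep t) (fun t ht => ?_)]
  · refine intervalIntegral.integral_congr fun t ht => ?_
    rw [uIcc_of_le zero_le_one] at ht
    rw [Function.comp_apply, hFhom _ _ _ (by nlinarith [ht.1, ht.2]), mul_comm]
  · simp only [min_eq_left zero_le_one, max_eq_right zero_le_one] at ht
    nlinarith [ht.1, ht.2]

theorem pathLength_pathConcat (hFhom : ∀ x (c : ℝ) v, 0 ≤ c → F x (c • v) = c * F x v)
    {γ₁ γ₁' γ₂ γ₂' : ℝ → E} (h1 : γ₁ 1 = γ₂ 0) (h1' : γ₁' 1 = γ₂' 0)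
    (hint : IntervalIntegrable
      (fun t => F (pathConcat γ₁ γ₂ t) (pathConcat ((2 : ℝ) • γ₁') ((2 : ℝ) • γ₂') t)) volume 0 1) :
    pathLength F (pathConcat γ₁ γ₂) (pathConcat ((2 : ℝ) • γ₁') ((2 : ℝ) • γ₂')) =
      pathLength F γ₁ γ₁' + pathLength F γ₂ γ₂' := by
  set f := fun t => F (pathConcat γ₁ γ₂ t) (pathConcat ((2 : ℝ) • γ₁') ((2 : ℝ) • γ₂') t)
  have hhalf : (1 / 2 : ℝ) ∈ uIcc 0 1 := by rw [uIcc_of_le zero_le_one]; norm_num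
  have hfirst : ∫ t in (0 : ℝ)..1 / 2, f t = pathLength F γ₁ γ₁' := by
    rw [intervalIntegral.integral_congr (g := fun t => (2 : ℝ) • F (γ₁ (2 * t)) (γ₁' (2 * t)))
      fun t ht => ?_, intervalIntegral.integral_smul,
      intervalIntegral.smul_integral_comp_mul_left (fun u => F (γ₁ u) (γ₁' u))]
    · norm_num [pathLength]
    · rw [uIcc_of_le (by norm_num)] at ht
      simp only [f, pathConcat, if_pos ht.2, Pi.smul_apply, hFhom _ _ _ zero_le_two, smul_eq_mul]
  have hsecond : ∫ t in (1 / 2 : ℝ)..1, f t = pathLength F γ₂ γ₂' := by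
    rw [intervalIntegral.integral_congr
      (g := fun t => (2 : ℝ) • F (γ₂ (2 * t - 1)) (γ₂' (2 * t - 1))) fun t ht => ?_,
      intervalIntegral.integral_smul,
      intervalIntegral.smul_integral_comp_mul_sub (fun u => F (γ₂ u) (γ₂' u))]
    · norm_num [pathLength]
    · rw [uIcc_of_le (by norm_num)] at ht
      rcases ht.1.eq_or_lt with rfl | hlt
      · norm_num [f, pathConcat, h1, h1', hFhom _ _ _ zero_le_two]
      · simp only [f, pathConcat, if_neg (not_le.2 hlt), Pi.smul_apply, hFhom _ _ _ zero_le_two,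
          smul_eq_mul]
  rw [pathLength, ← intervalIntegral.integral_add_adjacent_intervals
    (hint.mono_set (uIcc_subset_uIcc_left hhalf)) (hint.mono_set (uIcc_subset_uIcc_right hhalf)),
    hfirst, hsecond]

theorem pathLength_pathConcat_le (hF : ∀ x v, 0 ≤ F x v)
    (hFhom : ∀ x (c : ℝ) v, 0 ≤ c → F x (c • v) = c * F x v)
    {γ₁ γ₁' γ₂ γ₂' : ℝ → E} (h1 : γ₁ 1 = γ₂ 0) (h1' : γ₁' 1 = γ₂' 0) :
    pathLength F (pathConcat γ₁ γ₂) (pathConcat ((2 : ℝ) • γ₁') ((2 : ℝ) • γ₂')) ≤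
      pathLength F γ₁ γ₁' + pathLength F γ₂ γ₂' := by
  by_cases hint : IntervalIntegrable
    (fun t => F (pathConcat γ₁ γ₂ t) (pathConcat ((2 : ℝ) • γ₁') ((2 : ℝ) • γ₂') t)) volume 0 1
  · exact (pathLength_pathConcat hFhom h1 h1' hint).le
  · rw [pathLength, intervalIntegral.integral_undef hint]
    exact add_nonneg (pathLength_nonneg hF _ _) (pathLength_nonneg hF _ _)

theorem exists_pathLength_le_add (hF : ∀ x v, 0 ≤ F x v)
    (hFhom : ∀ x (c : ℝ) v, 0 ≤ c → F x (c • v) = c * F x v)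
    {γ₁ γ₁' γ₂ γ₂' : ℝ → E} (hγ₁ : ∀ t, HasDerivAt γ₁ (γ₁' t) t) (hγ₁' : Continuous γ₁')
    (hγ₂ : ∀ t, HasDerivAt γ₂ (γ₂' t) t) (hγ₂' : Continuous γ₂') (h : γ₁ 1 = γ₂ 0) :
    ∃ Γ Γ' : ℝ → E, (∀ t, HasDerivAt Γ (Γ' t) t) ∧ Continuous Γ' ∧
      Γ 0 = γ₁ 0 ∧ Γ 1 = γ₂ 1 ∧
      pathLength F Γ Γ' ≤ pathLength F γ₁ γ₁' + pathLength F γ₂ γ₂' := by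
  have hη₁ := fun t => (hγ₁ _).scomp t (hasDerivAt_smoothstep t)
  have hη₂ := fun t => (hγ₂ _).scomp t (hasDerivAt_smoothstep t)
  refine ⟨_, _, hasDerivAt_pathConcat hη₁ hη₂ (by simp [h]) (by simp),
    continuous_pathConcat (by fun_prop) (by fun_prop) (by simp), by simp [pathConcat],
    by norm_num [pathConcat], ?_⟩
  rw [← pathLength_comp_smoothstep hFhom γ₁ γ₁', ← pathLength_comp_smoothstep hFhom γ₂ γ₂']
  exact pathLength_pathConcat_le hF hFhom (by simp [h]) (by simp)

variable (F)

def admissibleLengths (a b : E) : Set ℝ :=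
  {l | ∃ γ γ' : ℝ → E, (∀ t, HasDerivAt γ (γ' t) t) ∧ Continuous γ' ∧
    γ 0 = a ∧ γ 1 = b ∧ l = pathLength F γ γ'}

noncomputable def geodesicDist (a b : E) : ℝ := sInf (admissibleLengths F a b)

variable {F}

theorem admissibleLengths_nonempty (a b : E) : (admissibleLengths F a b).Nonempty :=
  ⟨_, fun t => a + t • (b - a), fun _ => b - a,
    fun t => by simpa using ((hasDerivAt_id t).smul_const (b - a)).const_add a,
    continuous_const, by simp, by simp, rfl⟩

theorem bddBelow_admissibleLengths (hF : ∀ x v, 0 ≤ F x v) (a b : E) :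
    BddBelow (admissibleLengths F a b) :=
  ⟨0, by rintro _ ⟨γ, γ', -, -, -, -, rfl⟩; exact pathLength_nonneg hF γ γ'⟩

theorem geodesicDist_le_pathLength (hF : ∀ x v, 0 ≤ F x v) {a b : E} {γ γ' : ℝ → E}
    (hγ : ∀ t, HasDerivAt γ (γ' t) t) (hγ' : Continuous γ') (h0 : γ 0 = a) (h1 : γ 1 = b) :
    geodesicDist F a b ≤ pathLength F γ γ' :=
  csInf_le (bddBelow_admissibleLengths hF a b) ⟨γ, γ', hγ, hγ', h0, h1, rfl⟩

theorem geodesicDist_le_mul_norm_sub {L : ℝ} (hF : ∀ x v, 0 ≤ F x v)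
    (hFL : ∀ x v, F x v ≤ L * ‖v‖) (a b : E) : geodesicDist F a b ≤ L * ‖b - a‖ :=
  (geodesicDist_le_pathLength hF (γ := fun t => a + t • (b - a))
    (fun t => by simpa using ((hasDerivAt_id t).smul_const (b - a)).const_add a)
    continuous_const (by simp) (by simp)).trans (pathLength_const_le hF hFL _ _)

theorem geodesicDist_nonpos (hF : ∀ x v, 0 ≤ F x v) {a b : E}
    (h : ∀ ε > 0, ∃ γ γ' : ℝ → E, (∀ t, HasDerivAt γ (γ' t) t) ∧ Continuous γ' ∧
      γ 0 = a ∧ γ 1 = b ∧ pathLength F γ γ' < ε) :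
    geodesicDist F a b ≤ 0 :=
  le_of_forall_pos_lt_add fun ε hε => by
    obtain ⟨γ, γ', hγ, hγ', h0, h1, hlt⟩ := h ε hε
    simpa using (geodesicDist_le_pathLength hF hγ hγ' h0 h1).trans_lt hlt

theorem geodesicDist_triangle (hF : ∀ x v, 0 ≤ F x v)
    (hFhom : ∀ x (c : ℝ) v, 0 ≤ c → F x (c • v) = c * F x v) (a b c : E) :
    geodesicDist F a c ≤ geodesicDist F a b + geodesicDist F b c := by
  refine le_of_forall_pos_lt_add fun ε hε => ?_
  obtain ⟨_, ⟨γ₁, γ₁', hγ₁, hγ₁', ha, hb, rfl⟩, hlt₁⟩ :=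
    exists_lt_of_csInf_lt (admissibleLengths_nonempty (F := F) a b)
      (lt_add_of_pos_right _ (half_pos hε))
  obtain ⟨_, ⟨γ₂, γ₂', hγ₂, hγ₂', hb', hc, rfl⟩, hlt₂⟩ :=
    exists_lt_of_csInf_lt (admissibleLengths_nonempty (F := F) b c)
      (lt_add_of_pos_right _ (half_pos hε))
  obtain ⟨Γ, Γ', hΓ, hΓ', h0, h1, hle⟩ :=
    exists_pathLength_le_add hF hFhom hγ₁ hγ₁' hγ₂ hγ₂' (hb.trans hb'.symm)
  calc geodesicDist F a c ≤ pathLength F Γ Γ' :=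
        geodesicDist_le_pathLength hF hΓ hΓ' (h0.trans ha) (h1.trans hc)
    _ ≤ pathLength F γ₁ γ₁' + pathLength F γ₂ γ₂' := hle
    _ < geodesicDist F a b + geodesicDist F b c + ε := by
      unfold geodesicDist at *; linarith

end GeodesicDist

theorem le_sum_of_chain {α : Type*} {d : α → α → ℝ} {R : α → α → Prop}
    (htri : ∀ a b c, d a c ≤ d a b + d b c) (hR : ∀ a b, R a b → d a b ≤ 0) :
    ∀ {n : ℕ} {p q : Fin (n + 1) → α} {a b : α}, R a (p 0) →
      (∀ i : Fin n, R (q i.castSucc) (p i.succ)) → R (q (Fin.last n)) b →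
      d a b ≤ ∑ i, d (p i) (q i) := by
  have htri₃ : ∀ a x y b, d a b ≤ d a x + d x y + d y b := fun a x y b =>
    (htri a y b).trans (add_le_add_left (htri a x y) _)
  intro n
  induction n with
  | zero =>
    intro p q a b h0 _ hlast
    have hlast' : d (q 0) b ≤ 0 := hR _ _ hlast
    rw [Fin.sum_univ_one]
    linarith [htri₃ a (p 0) (q 0) b, hR _ _ h0]
  | succ n ih =>
    intro p q a b h0 hmid hlast
    have hinit := ih (p := fun i => p i.castSucc) (q := fun i => q i.castSucc)
      (b := p (Fin.last _)) (by rwa [Fin.castSucc_zero])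
      (fun i => by rw [← Fin.succ_castSucc]; exact hmid i.castSucc)
      (by rw [← Fin.succ_last]; exact hmid (Fin.last n))
    rw [Fin.sum_univ_castSucc]
    linarith [htri₃ a (p (Fin.last _)) (q (Fin.last _)) b, hR _ _ hlast]

theorem sqrt_dotProduct_mulVec_smul {n : Type*} [Fintype n] (A : Matrix n n ℝ) (c : ℝ)
    (v : n → ℝ) :
    √((c • v) ⬝ᵥ A *ᵥ (c • v)) = |c| * √(v ⬝ᵥ A *ᵥ v) := by
  rw [mulVec_smul, smul_dotProduct, dotProduct_smul, smul_eq_mul, smul_eq_mul, ← mul_assoc,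
    ← sq, Real.sqrt_mul (sq_nonneg c), Real.sqrt_sq_eq_abs]

theorem quotient_close_implies_geodesic_close_general {D : ℕ}
    (G : EuclideanSpace ℝ (Fin D) → Matrix (Fin D) (Fin D) ℝ)
    (L : ℝ) (hL : 0 < L)
    (hbound : ∀ (w v : EuclideanSpace ℝ (Fin D)),
      Real.sqrt (v ⬝ᵥ (G w).mulVec v) ≤ L * ‖v‖)
    (R : EuclideanSpace ℝ (Fin D) → EuclideanSpace ℝ (Fin D) → Prop)
    (hsmall : ∀ w w', R w w' → ∀ ε > 0,
      ∃ γ γ' : ℝ → EuclideanSpace ℝ (Fin D),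
        (∀ t, HasDerivAt γ (γ' t) t) ∧ Continuous γ' ∧ γ 0 = w ∧ γ 1 = w' ∧
        (∫ t in (0:ℝ)..1, Real.sqrt (γ' t ⬝ᵥ (G (γ t)).mulVec (γ' t))) < ε)
    (w₀ w₁ : EuclideanSpace ℝ (Fin D)) (δ : ℝ) (hδ : 0 < δ)
    (hchain : ∃ (n : ℕ) (p q : Fin (n + 1) → EuclideanSpace ℝ (Fin D)),
      R w₀ (p 0) ∧ (∀ i : Fin n, R (q i.castSucc) (p i.succ)) ∧
      R (q (Fin.last n)) w₁ ∧ ∑ i, ‖p i - q i‖ < δ) :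
    sInf { l : ℝ | ∃ γ γ' : ℝ → EuclideanSpace ℝ (Fin D),
        (∀ t, HasDerivAt γ (γ' t) t) ∧ Continuous γ' ∧
        γ 0 = w₀ ∧ γ 1 = w₁ ∧
        l = ∫ t in (0:ℝ)..1, Real.sqrt (γ' t ⬝ᵥ (G (γ t)).mulVec (γ' t)) } <
      3 * L * δ := by
  obtain ⟨n, p, q, h0, hmid, hlast, hsum⟩ := hchain
  set F : EuclideanSpace ℝ (Fin D) → EuclideanSpace ℝ (Fin D) → ℝ :=
    fun w v => √(v ⬝ᵥ (G w) *ᵥ v)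
  have hF : ∀ w v, 0 ≤ F w v := fun _ _ => Real.sqrt_nonneg _
  have hFhom : ∀ w (c : ℝ) v, 0 ≤ c → F w (c • v) = c * F w v := fun w c v hc => by
    simp only [F]
    rw [WithLp.ofLp_smul, sqrt_dotProduct_mulVec_smul, abs_of_nonneg hc]
  have hquot : geodesicDist F w₀ w₁ ≤ ∑ i, geodesicDist F (p i) (q i) :=
    le_sum_of_chain (geodesicDist_triangle hF hFhom)
      (fun a b hab => geodesicDist_nonpos hF (hsmall a b hab)) h0 hmid hlast
  have hsegments : ∑ i, geodesicDist F (p i) (q i) ≤ L * ∑ i, ‖p i - q i‖ := by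
    rw [Finset.mul_sum]
    exact Finset.sum_le_sum fun i _ =>
      (geodesicDist_le_mul_norm_sub hF hbound (p i) (q i)).trans_eq (by rw [norm_sub_rev])
  show geodesicDist F w₀ w₁ < 3 * L * δ
  calc geodesicDist F w₀ w₁ ≤ L * ∑ i, ‖p i - q i‖ := hquot.trans hsegments
    _ < L * δ := mul_lt_mul_of_pos_left hsum hL
    _ ≤ 3 * L * δ := by linarith [mul_pos hL hδ]

/-- If the pullback seminorm is uniformly bounded (`‖v‖_{G_w} ≤ L‖v‖`), and any
two equivalent parameters are joined by paths of arbitrarily small pullback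
length, then a quotient (chain) distance `< δ` between `w₀` and `w₁` implies a
geodesic pullback distance `< 3Lδ`. -/
theorem quotient_close_implies_geodesic_close {D : ℕ}
    (G : EuclideanSpace ℝ (Fin D) → Matrix (Fin D) (Fin D) ℝ)
    (hG : ∀ w, (G w).PosSemidef) (L : ℝ) (hL : 0 < L)
    (hbound : ∀ (w v : EuclideanSpace ℝ (Fin D)),
      Real.sqrt (v ⬝ᵥ (G w).mulVec v) ≤ L * ‖v‖)
    (R : EuclideanSpace ℝ (Fin D) → EuclideanSpace ℝ (Fin D) → Prop)
    (hR : Equivalence R)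
    (hsmall : ∀ w w', R w w' → ∀ ε > 0,
      ∃ γ γ' : ℝ → EuclideanSpace ℝ (Fin D),
        (∀ t, HasDerivAt γ (γ' t) t) ∧ Continuous γ' ∧ γ 0 = w ∧ γ 1 = w' ∧
        (∫ t in (0:ℝ)..1, Real.sqrt (γ' t ⬝ᵥ (G (γ t)).mulVec (γ' t))) < ε)
    (w₀ w₁ : EuclideanSpace ℝ (Fin D)) (δ : ℝ) (hδ : 0 < δ)
    (hchain : ∃ (n : ℕ) (p q : Fin (n + 1) → EuclideanSpace ℝ (Fin D)),
      R w₀ (p 0) ∧ (∀ i : Fin n, R (q i.castSucc) (p i.succ)) ∧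
      R (q (Fin.last n)) w₁ ∧ ∑ i, ‖p i - q i‖ < δ) :
    sInf { l : ℝ | ∃ γ γ' : ℝ → EuclideanSpace ℝ (Fin D),
        (∀ t, HasDerivAt γ (γ' t) t) ∧ Continuous γ' ∧
        γ 0 = w₀ ∧ γ 1 = w₁ ∧
        l = ∫ t in (0:ℝ)..1, Real.sqrt (γ' t ⬝ᵥ (G (γ t)).mulVec (γ' t)) } <
      3 * L * δ :=
  quotient_close_implies_geodesic_close_general G L hL hbound R hsmall w₀ w₁ δ hδ hchain
end
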